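/- arXiv:1406.4765 — 2 statements merged into one kernel-verified Lean document; each statement's English description precedes it below -/
import Mathlib

section
/- Let z = (z_1, ..., z_p) be a random vector with independent components, E(z_i) = 0, E(z_i^2) = 1, and κ_i = E(z_i^4) - 3. Then for every orthogonal p×p matrix U with rows u_1', ..., u_p', one has Σ_{k=1}^p |E((u_k'z)^4) - 3| ≤ Σ_{i=1}^p |κ_i|. -/
/-!
For independent centred variables the binomial expansion of `E (X + Y)⁴` loses its odd mixed
terms, so the fourth cumulant `κ₄ X = E X⁴ - 3 (E X²)²` is additive; it is also homogeneous of
degree four. Hence for a unit vector `u`, `E (u'z)⁴ - 3 = ∑ᵢ uᵢ⁴ κᵢ`. The rows and columns of an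
orthogonal matrix are unit vectors, so `uₖᵢ⁴ ≤ uₖᵢ²`, and summing
`|∑ᵢ uₖᵢ⁴ κᵢ| ≤ ∑ᵢ uₖᵢ² |κᵢ|` over `k` gives `∑ᵢ |κᵢ|`.
-/

open MeasureTheory ProbabilityTheory Matrix Finset

namespace Matrix

variable {n : Type*} [Fintype n] [DecidableEq n] {U : Matrix n n ℝ}

lemma sum_sq_row_eq_one_of_mul_transpose_eq_one (hU : U * Uᵀ = 1) (k : n) :
    ∑ i, U k i ^ 2 = 1 := by
  simpa [mul_apply, sq] using congrFun (congrFun hU k) k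

lemma sum_sq_col_eq_one_of_mul_transpose_eq_one (hU : U * Uᵀ = 1) (i : n) :
    ∑ k, U k i ^ 2 = 1 :=
  sum_sq_row_eq_one_of_mul_transpose_eq_one (U := Uᵀ) (by simpa using mul_eq_one_comm.mp hU) i

lemma sq_entry_le_one_of_mul_transpose_eq_one (hU : U * Uᵀ = 1) (k i : n) : U k i ^ 2 ≤ 1 :=
  sum_sq_row_eq_one_of_mul_transpose_eq_one hU k ▸
    single_le_sum (f := fun j ↦ U k j ^ 2) (fun _ _ ↦ sq_nonneg _) (mem_univ i)

lemma sum_abs_sum_pow_four_mul_le_of_mul_transpose_eq_one (hU : U * Uᵀ = 1) (c : n → ℝ) :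
    ∑ k, |∑ i, U k i ^ 4 * c i| ≤ ∑ i, |c i| := by
  have hpow (k i : n) : U k i ^ 4 ≤ U k i ^ 2 := by
    rw [show U k i ^ 4 = (U k i ^ 2) ^ 2 by ring]
    exact pow_le_of_le_one (sq_nonneg _) (sq_entry_le_one_of_mul_transpose_eq_one hU k i)
      two_ne_zero
  calc ∑ k, |∑ i, U k i ^ 4 * c i|
      ≤ ∑ k, ∑ i, U k i ^ 2 * |c i| := by
        refine sum_le_sum fun k _ ↦ (abs_sum_le_sum_abs _ _).trans (sum_le_sum fun i _ ↦ ?_)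
        rw [abs_mul, abs_of_nonneg (by positivity)]
        exact mul_le_mul_of_nonneg_right (hpow k i) (abs_nonneg _)
    _ = ∑ i, |c i| := by
        rw [sum_comm]
        simp_rw [← sum_mul, sum_sq_col_eq_one_of_mul_transpose_eq_one hU, one_mul]

end Matrix

namespace ProbabilityTheory

variable {Ω ι : Type*} {mΩ : MeasurableSpace Ω} {μ : Measure Ω}

lemma _root_.MeasureTheory.MemLp.integrable_pow [IsFiniteMeasure μ] {X : Ω → ℝ} {n k : ℕ}
    (hX : MemLp X n μ) (hk : k ≤ n) : Integrable (fun ω ↦ X ω ^ k) μ := by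
  refine (integrable_norm_iff (hX.aestronglyMeasurable.pow k)).1 ?_
  simpa [norm_pow] using (hX.mono_exponent (by exact_mod_cast hk)).integrable_norm_pow'

lemma IndepFun.integral_add_pow [IsFiniteMeasure μ] {X Y : Ω → ℝ} (hXY : IndepFun X Y μ)
    {n : ℕ} (hX : MemLp X n μ) (hY : MemLp Y n μ) :
    ∫ ω, (X ω + Y ω) ^ n ∂μ =
      ∑ k ∈ range (n + 1), (∫ ω, X ω ^ k ∂μ) * (∫ ω, Y ω ^ (n - k) ∂μ) * n.choose k := by
  have hpow (k : ℕ) : IndepFun (fun ω ↦ X ω ^ k) (fun ω ↦ Y ω ^ (n - k)) μ :=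
    hXY.comp (measurable_id.pow_const k) (measurable_id.pow_const (n - k))
  have hint (k : ℕ) (hk : k ∈ range (n + 1)) :
      Integrable (fun ω ↦ X ω ^ k * Y ω ^ (n - k) * n.choose k) μ :=
    ((hpow k).integrable_mul (hX.integrable_pow (mem_range_succ_iff.1 hk))
      (hY.integrable_pow (n.sub_le k))).mul_const _
  simp_rw [add_pow]
  rw [integral_finsetSum _ hint]
  refine sum_congr rfl fun k _ ↦ ?_
  rw [integral_mul_const, ← (hpow k).integral_mul_eq_mul_integral
    (hX.aestronglyMeasurable.pow k) (hY.aestronglyMeasurable.pow _)]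
  rfl

/-- The fourth cumulant of a centred random variable; for `X` not centred this is not the
cumulant. -/
noncomputable def fourthCumulant (X : Ω → ℝ) (μ : Measure Ω) : ℝ :=
  ∫ ω, X ω ^ 4 ∂μ - 3 * (∫ ω, X ω ^ 2 ∂μ) ^ 2

lemma fourthCumulant_const_mul (c : ℝ) (X : Ω → ℝ) :
    fourthCumulant (fun ω ↦ c * X ω) μ = c ^ 4 * fourthCumulant X μ := by
  simp only [fourthCumulant, mul_pow, integral_const_mul]
  ring

lemma IndepFun.fourthCumulant_add [IsProbabilityMeasure μ] {X Y : Ω → ℝ} (hXY : IndepFun X Y μ)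
    (hX : MemLp X 4 μ) (hY : MemLp Y 4 μ) (hX₀ : ∫ ω, X ω ∂μ = 0) (hY₀ : ∫ ω, Y ω ∂μ = 0) :
    fourthCumulant (fun ω ↦ X ω + Y ω) μ = fourthCumulant X μ + fourthCumulant Y μ := by
  have h2 := hXY.integral_add_pow (n := 2) (hX.mono_exponent (by norm_num))
    (hY.mono_exponent (by norm_num))
  have h4 := hXY.integral_add_pow (n := 4) (by exact_mod_cast hX) (by exact_mod_cast hY)
  norm_num [sum_range_succ, Nat.choose, hX₀, hY₀] at h2 h4
  simp only [fourthCumulant, h2, h4]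
  ring

lemma iIndepFun.fourthCumulant_sum [IsProbabilityMeasure μ] {X : ι → Ω → ℝ}
    (hX : iIndepFun X μ) (hL4 : ∀ i, MemLp (X i) 4 μ) (hX₀ : ∀ i, ∫ ω, X i ω ∂μ = 0)
    (s : Finset ι) :
    fourthCumulant (fun ω ↦ ∑ i ∈ s, X i ω) μ = ∑ i ∈ s, fourthCumulant (X i) μ := by
  classical
  induction s using Finset.induction_on with
  | empty => simp [fourthCumulant]
  | insert i s hi ih =>
    have hindep : IndepFun (X i) (fun ω ↦ ∑ j ∈ s, X j ω) μ := by
      simpa [← sum_fn] using (hX.indepFun_finsetSum_of_notMem₀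
        (fun j ↦ (hL4 j).aestronglyMeasurable.aemeasurable) hi).symm
    have hsum₀ : ∫ ω, ∑ j ∈ s, X j ω ∂μ = 0 := by
      rw [integral_finsetSum _ fun j _ ↦ (hL4 j).integrable (by norm_num)]
      simp [hX₀]
    simp only [sum_insert hi]
    rw [hindep.fourthCumulant_add (hL4 i) (memLp_finsetSum _ fun j _ ↦ hL4 j) (hX₀ i) hsum₀, ih]

lemma iIndepFun.integral_sum_sq [IsProbabilityMeasure μ] {X : ι → Ω → ℝ}
    (hX : iIndepFun X μ) (hL2 : ∀ i, MemLp (X i) 2 μ) (hX₀ : ∀ i, ∫ ω, X i ω ∂μ = 0)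
    (s : Finset ι) :
    ∫ ω, (∑ i ∈ s, X i ω) ^ 2 ∂μ = ∑ i ∈ s, ∫ ω, X i ω ^ 2 ∂μ := by
  have hsum₀ : ∫ ω, ∑ i ∈ s, X i ω ∂μ = 0 := by
    rw [integral_finsetSum _ fun i _ ↦ (hL2 i).integrable (by norm_num)]
    simp [hX₀]
  have hvar_eq {Y : Ω → ℝ} (hY : MemLp Y 2 μ) (hY₀ : ∫ ω, Y ω ∂μ = 0) :
      variance Y μ = ∫ ω, Y ω ^ 2 ∂μ :=
    variance_of_integral_eq_zero hY.aestronglyMeasurable.aemeasurable hY₀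
  have hvar := IndepFun.variance_sum (s := s) (fun i _ ↦ hL2 i) fun i _ j _ hij ↦ hX.indepFun hij
  rw [hvar_eq (memLp_finsetSum' _ fun i _ ↦ hL2 i) (by simpa [← sum_fn] using hsum₀)] at hvar
  simpa [hvar_eq (hL2 _) (hX₀ _)] using hvar

lemma iIndepFun.integral_sum_mul_pow_four_sub_three [IsProbabilityMeasure μ] {X : ι → Ω → ℝ}
    (hX : iIndepFun X μ) (hL4 : ∀ i, MemLp (X i) 4 μ) (hX₀ : ∀ i, ∫ ω, X i ω ∂μ = 0)
    (hX₂ : ∀ i, ∫ ω, X i ω ^ 2 ∂μ = 1) (s : Finset ι) {a : ι → ℝ} (ha : ∑ i ∈ s, a i ^ 2 = 1) :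
    ∫ ω, (∑ i ∈ s, a i * X i ω) ^ 4 ∂μ - 3 = ∑ i ∈ s, a i ^ 4 * (∫ ω, X i ω ^ 4 ∂μ - 3) := by
  set Y : ι → Ω → ℝ := fun i ω ↦ a i * X i ω
  have hY : iIndepFun Y μ := hX.comp (fun i x ↦ a i * x) fun i ↦ measurable_const_mul _
  have hYL4 (i : ι) : MemLp (Y i) 4 μ := (hL4 i).const_mul _
  have hY₀ (i : ι) : ∫ ω, Y i ω ∂μ = 0 := by simp [Y, integral_const_mul, hX₀]
  have hsum₂ : ∫ ω, (∑ i ∈ s, Y i ω) ^ 2 ∂μ = 1 := by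
    rw [hY.integral_sum_sq (fun i ↦ (hYL4 i).mono_exponent (by norm_num)) hY₀]
    simpa [Y, mul_pow, integral_const_mul, hX₂] using ha
  have h4 := hY.fourthCumulant_sum hYL4 hY₀ s
  rw [fourthCumulant, hsum₂] at h4
  simp only [Y, fourthCumulant_const_mul] at h4
  simpa [fourthCumulant, hX₂] using h4

end ProbabilityTheory

theorem sum_abs_fourth_moment_le_sum_kurtosis_general
    {Ω : Type*} [MeasureSpace Ω] [IsProbabilityMeasure (ℙ : Measure Ω)]
    {p : ℕ} (z : Fin p → Ω → ℝ) (κ : Fin p → ℝ)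
    (hindep : iIndepFun z ℙ)
    (hL4 : ∀ i, MemLp (z i) 4 ℙ)
    (hmean : ∀ i, ∫ ω, z i ω = 0)
    (hvar : ∀ i, ∫ ω, (z i ω) ^ 2 = 1)
    (hκ : ∀ i, κ i = (∫ ω, (z i ω) ^ 4) - 3)
    (U : Matrix (Fin p) (Fin p) ℝ) (hU : U * Uᵀ = 1) :
    ∑ k, |(∫ ω, (∑ i, U k i * z i ω) ^ 4) - 3| ≤ ∑ i, |κ i| := by
  have hrow (k : Fin p) := hindep.integral_sum_mul_pow_four_sub_three hL4 hmean hvar univ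
    (sum_sq_row_eq_one_of_mul_transpose_eq_one hU k)
  simp_rw [hrow, ← hκ]
  exact sum_abs_sum_pow_four_mul_le_of_mul_transpose_eq_one hU κ

/-- For a random vector with independent standardized components and an orthogonal
matrix `U` with rows `u_k`, `∑ k |E((u_k'z)^4) - 3| ≤ ∑ i |κ_i|`. -/
theorem sum_abs_fourth_moment_le_sum_kurtosis
    {Ω : Type*} [MeasureSpace Ω] [IsProbabilityMeasure (ℙ : Measure Ω)]
    {p : ℕ} (z : Fin p → Ω → ℝ) (κ : Fin p → ℝ)
    (hmeas : ∀ i, Measurable (z i))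
    (hindep : iIndepFun z ℙ)
    (hL4 : ∀ i, MemLp (z i) 4 ℙ)
    (hmean : ∀ i, ∫ ω, z i ω = 0)
    (hvar : ∀ i, ∫ ω, (z i ω) ^ 2 = 1)
    (hκ : ∀ i, κ i = (∫ ω, (z i ω) ^ 4) - 3)
    (U : Matrix (Fin p) (Fin p) ℝ) (hU : U * Uᵀ = 1) :
    ∑ k, |(∫ ω, (∑ i, U k i * z i ω) ^ 4) - 3| ≤ ∑ i, |κ i| :=
  sum_abs_fourth_moment_le_sum_kurtosis_general z κ hindep hL4 hmean hvar hκ U hU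
end

section
/- Let z be a p-dimensional random vector with independent standardized components and kurtosis values κ_1, ..., κ_p, let U be an orthogonal matrix and set x_st = U'z. For an orthogonal matrix V, define D(V) = Σ_{i=1}^p Σ_{j=1}^p ‖diag(V C^{ij}(x_st) V')‖², where C^{ij}(x) = E[(x' E^{ij} x) x x'] - E^{ij} - E^{ji} - tr(E^{ij}) I_p. Then with G = VU', D(V) = Σ_{k=1}^p Σ_{l=1}^p g_{kl}^4 κ_l^2. -/
open MeasureTheory ProbabilityTheory Matrix

/-!
Independence pins down the fourth moments,
`E[z_a z_b z_c z_d] = δ_ab δ_cd + δ_ac δ_bd + δ_ad δ_bc + κ_a [a = b = c = d]`,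
so `C(z, A) = diag(κ_k A_kk)`. The cumulant matrix is equivariant under orthogonal maps,
`C(Bz, A) = B C(z, B'AB) B'`; hence, with `G = VU'`, the `k`-th diagonal entry of
`V C^{ij}(x_st) V'` is the `(i, j)` entry of `U' diag(κ_a g_ka²) U`. Summing its squares over
`i, j` gives a squared Frobenius norm, which conjugation by the orthogonal `U` preserves:
`Σ_a κ_a² g_ka⁴`.
-/

/-- The fourth cumulant matrix functional
`C(x, A) = E[(x'Ax) x x'] - A - A' - tr(A) I_p`. -/
noncomputable def cumulantMatrix {Ω : Type*} [MeasureSpace Ω] {p : ℕ}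
    (x : Ω → Fin p → ℝ) (A : Matrix (Fin p) (Fin p) ℝ) : Matrix (Fin p) (Fin p) ℝ :=
  (Matrix.of fun k l => ∫ ω, (x ω ⬝ᵥ A.mulVec (x ω)) * x ω k * x ω l)
    - A - Aᵀ - A.trace • (1 : Matrix (Fin p) (Fin p) ℝ)

lemma eq_pairings_add_diag_of_symmetric {ι : Type*} [DecidableEq ι]
    (m : ι → ι → ι → ι → ℝ) (κ : ι → ℝ)
    (h12 : ∀ a b c d, m a b c d = m b a c d)
    (h23 : ∀ a b c d, m a b c d = m a c b d)
    (h34 : ∀ a b c d, m a b c d = m a b d c)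
    (hsingle : ∀ a b c d, a ≠ b → a ≠ c → a ≠ d → m a b c d = 0)
    (hpair : ∀ a c, a ≠ c → m a a c c = 1)
    (hdiag : ∀ a, m a a a a = κ a + 3) (a b c d : ι) :
    m a b c d = (if a = b then 1 else 0) * (if c = d then 1 else 0)
      + (if a = c then 1 else 0) * (if b = d then 1 else 0)
      + (if a = d then 1 else 0) * (if b = c then 1 else 0)
      + if a = b ∧ a = c ∧ a = d then κ a else 0 := by
  grind

section FourthMoments

variable {Ω ι : Type*} [MeasurableSpace Ω] {μ : Measure Ω}

lemma integrable_mul_mul_mul {f g h k : Ω → ℝ} (hf : MemLp f 4 μ) (hg : MemLp g 4 μ)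
    (hh : MemLp h 4 μ) (hk : MemLp k 4 μ) :
    Integrable (fun ω => f ω * g ω * h ω * k ω) μ := by
  have hprod := MemLp.prod' (s := Finset.univ) (f := ![f, g, h, k]) (p := fun _ => 4)
    (μ := μ) (by intro i _; fin_cases i <;> assumption)
  rw [← memLp_one_iff_integrable]
  convert hprod using 1
  · ext ω; simp [Fin.prod_univ_four]
  · simp only [Finset.sum_const, Finset.card_univ, Fintype.card_fin, nsmul_eq_mul]
    norm_num [ENNReal.mul_inv_cancel]

lemma integral_sum_sum_const_mul {m n : Type*} [Fintype m] [Fintype n]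
    (c : m → n → ℝ) {f : m → n → Ω → ℝ} (hf : ∀ i j, Integrable (f i j) μ) :
    ∫ ω, ∑ i, ∑ j, c i j * f i j ω ∂μ = ∑ i, ∑ j, c i j * ∫ ω, f i j ω ∂μ := by
  rw [integral_finsetSum _ fun i _ => integrable_finsetSum _ fun j _ => (hf i j).const_mul _]
  refine Finset.sum_congr rfl fun i _ => ?_
  rw [integral_finsetSum _ fun j _ => (hf i j).const_mul _]
  simp only [integral_const_mul]

variable {z : ι → Ω → ℝ}

lemma integral_mul_mul_mul_eq_zero_of_iIndepFun (hindep : iIndepFun z μ)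
    (hz : ∀ i, AEStronglyMeasurable (z i) μ) (hmean : ∀ i, ∫ ω, z i ω ∂μ = 0) {a b c d : ι}
    (hab : a ≠ b) (hac : a ≠ c) (had : a ≠ d) :
    ∫ ω, z a ω * z b ω * z c ω * z d ω ∂μ = 0 := by
  classical
  have hφ : Measurable fun v : ({a} : Finset ι) → ℝ => v ⟨a, Finset.mem_singleton_self a⟩ :=
    measurable_pi_apply _
  have hψ : Measurable fun v : ({b, c, d} : Finset ι) → ℝ =>
      v ⟨b, by simp⟩ * v ⟨c, by simp⟩ * v ⟨d, by simp⟩ := by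
    fun_prop
  have hsplit : IndepFun (z a) (fun ω => z b ω * z c ω * z d ω) μ :=
    (hindep.indepFun_finset₀ {a} {b, c, d} (by simp [hab, hac, had])
      fun i => (hz i).aemeasurable).comp hφ hψ
  have hfactor := hsplit.integral_fun_mul_eq_mul_integral (hz a) (by fun_prop)
  simp only [mul_assoc] at hfactor ⊢
  simp [hfactor, hmean]

lemma integral_mul_self_mul_mul_self_of_iIndepFun (hindep : iIndepFun z μ)
    (hz : ∀ i, AEStronglyMeasurable (z i) μ) (hvar : ∀ i, ∫ ω, z i ω ^ 2 ∂μ = 1) {a c : ι}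
    (hac : a ≠ c) :
    ∫ ω, z a ω * z a ω * z c ω * z c ω ∂μ = 1 := by
  have hsplit : IndepFun (fun ω => z a ω ^ 2) (fun ω => z c ω ^ 2) μ :=
    (hindep.indepFun hac).comp (φ := fun x => x ^ 2) (ψ := fun x => x ^ 2)
      (by fun_prop) (by fun_prop)
  calc ∫ ω, z a ω * z a ω * z c ω * z c ω ∂μ = ∫ ω, z a ω ^ 2 * z c ω ^ 2 ∂μ := by
        congr 1 with ω; ring
    _ = 1 := by
        rw [hsplit.integral_fun_mul_eq_mul_integral ((hz a).pow 2) ((hz c).pow 2)]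
        simp [hvar]

lemma integral_mul_mul_mul_of_iIndepFun [DecidableEq ι] (κ : ι → ℝ) (hindep : iIndepFun z μ)
    (hz : ∀ i, AEStronglyMeasurable (z i) μ) (hmean : ∀ i, ∫ ω, z i ω ∂μ = 0)
    (hvar : ∀ i, ∫ ω, z i ω ^ 2 ∂μ = 1) (hκ : ∀ i, κ i = (∫ ω, z i ω ^ 4 ∂μ) - 3)
    (a b c d : ι) :
    ∫ ω, z a ω * z b ω * z c ω * z d ω ∂μ
      = (if a = b then 1 else 0) * (if c = d then 1 else 0)
        + (if a = c then 1 else 0) * (if b = d then 1 else 0)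
        + (if a = d then 1 else 0) * (if b = c then 1 else 0)
        + if a = b ∧ a = c ∧ a = d then κ a else 0 := by
  refine eq_pairings_add_diag_of_symmetric (fun a b c d => ∫ ω, z a ω * z b ω * z c ω * z d ω ∂μ)
    κ (fun _ _ _ _ => ?_) (fun _ _ _ _ => ?_) (fun _ _ _ _ => ?_)
    (fun _ _ _ _ => integral_mul_mul_mul_eq_zero_of_iIndepFun hindep hz hmean)
    (fun _ _ => integral_mul_self_mul_mul_self_of_iIndepFun hindep hz hvar) (fun i => ?_) a b c d
  iterate 3 congr 1 with ω; ring
  rw [hκ, sub_add_cancel]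
  congr 1 with ω; ring

end FourthMoments

section QuadraticFormMoments

variable {Ω : Type*} {p : ℕ}

lemma dotProduct_mulVec_mul_mul_eq_sum (x : Fin p → ℝ) (A : Matrix (Fin p) (Fin p) ℝ)
    (k l : Fin p) :
    (x ⬝ᵥ A *ᵥ x) * x k * x l = ∑ a, ∑ b, A a b * (x a * x b * x k * x l) := by
  simp only [dotProduct, mulVec, Finset.mul_sum, Finset.sum_mul]
  exact Finset.sum_congr rfl fun a _ => Finset.sum_congr rfl fun b _ => by ring

variable [MeasurableSpace Ω] {μ : Measure Ω} {y : Ω → Fin p → ℝ}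

lemma integrable_dotProduct_mulVec_mul_mul (hy : ∀ i, MemLp (fun ω => y ω i) 4 μ)
    (A : Matrix (Fin p) (Fin p) ℝ) (k l : Fin p) :
    Integrable (fun ω => (y ω ⬝ᵥ A *ᵥ y ω) * y ω k * y ω l) μ := by
  simp only [dotProduct_mulVec_mul_mul_eq_sum]
  exact integrable_finsetSum _ fun a _ => integrable_finsetSum _ fun b _ =>
    (integrable_mul_mul_mul (hy a) (hy b) (hy k) (hy l)).const_mul _

lemma integral_dotProduct_mulVec_mul_mul (hy : ∀ i, MemLp (fun ω => y ω i) 4 μ)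
    (A : Matrix (Fin p) (Fin p) ℝ) (k l : Fin p) :
    ∫ ω, (y ω ⬝ᵥ A *ᵥ y ω) * y ω k * y ω l ∂μ
      = ∑ a, ∑ b, A a b * ∫ ω, y ω a * y ω b * y ω k * y ω l ∂μ := by
  simp only [dotProduct_mulVec_mul_mul_eq_sum]
  exact integral_sum_sum_const_mul _ fun a b => integrable_mul_mul_mul (hy a) (hy b) (hy k) (hy l)

end QuadraticFormMoments

section CumulantMatrix

variable {Ω : Type*} [MeasureSpace Ω] {p : ℕ}

lemma cumulantMatrix_mulVec {y : Ω → Fin p → ℝ}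
    (hy : ∀ i, MemLp (fun ω => y ω i) 4) (A : Matrix (Fin p) (Fin p) ℝ)
    {B : Matrix (Fin p) (Fin p) ℝ} (hB : B * Bᵀ = 1) :
    cumulantMatrix (fun ω => B *ᵥ y ω) A = B * cumulantMatrix y (Bᵀ * A * B) * Bᵀ := by
  have hquad : ∀ ω, (B *ᵥ y ω) ⬝ᵥ A *ᵥ (B *ᵥ y ω) = y ω ⬝ᵥ (Bᵀ * A * B) *ᵥ y ω := fun ω => by
    rw [dotProduct_mulVec, vecMul_mulVec, ← dotProduct_mulVec, mulVec_mulVec]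
  have hmoment : (of fun k l => ∫ ω, ((B *ᵥ y ω) ⬝ᵥ A *ᵥ (B *ᵥ y ω)) * (B *ᵥ y ω) k * (B *ᵥ y ω) l)
      = B * (of fun k l => ∫ ω, (y ω ⬝ᵥ (Bᵀ * A * B) *ᵥ y ω) * y ω k * y ω l) * Bᵀ := by
    ext k l
    have hexpand : ∀ ω, (y ω ⬝ᵥ (Bᵀ * A * B) *ᵥ y ω) * (B *ᵥ y ω) k * (B *ᵥ y ω) l
        = ∑ d, ∑ c, B k c * B l d * ((y ω ⬝ᵥ (Bᵀ * A * B) *ᵥ y ω) * y ω c * y ω d) := fun ω => by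
      generalize y ω ⬝ᵥ (Bᵀ * A * B) *ᵥ y ω = q
      simp only [mulVec, dotProduct, Finset.mul_sum, Finset.sum_mul]
      exact Finset.sum_congr rfl fun d _ => Finset.sum_congr rfl fun c _ => by ring
    simp only [of_apply, hquad, hexpand, mul_apply, transpose_apply, Finset.sum_mul]
    rw [integral_sum_sum_const_mul _ fun d c => integrable_dotProduct_mulVec_mul_mul hy _ c d]
    exact Finset.sum_congr rfl fun d _ => Finset.sum_congr rfl fun c _ => by ring
  have htrace : (Bᵀ * A * B).trace = A.trace := by
    rw [trace_mul_cycle, hB, Matrix.one_mul]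
  have hconj : ∀ M : Matrix (Fin p) (Fin p) ℝ, B * (Bᵀ * M * B) * Bᵀ = M := fun M => by
    rw [← Matrix.mul_assoc, ← Matrix.mul_assoc, hB, Matrix.one_mul, Matrix.mul_assoc, hB,
      Matrix.mul_one]
  have htranspose : (Bᵀ * A * B)ᵀ = Bᵀ * Aᵀ * B := by
    simp only [transpose_mul, transpose_transpose, Matrix.mul_assoc]
  simp only [cumulantMatrix, hmoment, htrace, htranspose, hconj, Matrix.mul_sub, Matrix.sub_mul,
    Matrix.mul_smul, Matrix.smul_mul, Matrix.mul_one, hB]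

lemma cumulantMatrix_of_iIndepFun {z : Fin p → Ω → ℝ} (κ : Fin p → ℝ) (hindep : iIndepFun z)
    (hL4 : ∀ i, MemLp (z i) 4) (hmean : ∀ i, ∫ ω, z i ω = 0) (hvar : ∀ i, ∫ ω, z i ω ^ 2 = 1)
    (hκ : ∀ i, κ i = (∫ ω, z i ω ^ 4) - 3) (A : Matrix (Fin p) (Fin p) ℝ) :
    cumulantMatrix (fun ω i => z i ω) A = diagonal fun k => κ k * A k k := by
  ext k l
  rw [cumulantMatrix, Matrix.sub_apply, Matrix.sub_apply, Matrix.sub_apply, of_apply,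
    integral_dotProduct_mulVec_mul_mul hL4]
  simp only [integral_mul_mul_mul_of_iIndepFun κ hindep (fun i => (hL4 i).1) hmean hvar hκ]
  simp only [mul_ite, mul_one, mul_zero, ite_and, mul_add, Finset.sum_add_distrib,
    Finset.sum_ite_irrel, Finset.sum_ite_eq, Finset.mem_univ, ↓reduceIte, Finset.sum_const_zero,
    Finset.sum_ite_eq', transpose_apply, trace, diag_apply, Matrix.smul_apply, one_apply,
    smul_eq_mul, diagonal_apply]
  split_ifs <;> ring

end CumulantMatrix

section MatrixAlgebra

lemma mul_diagonal_mul_transpose_apply {l n : Type*} [Fintype n] [DecidableEq n]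
    (G : Matrix l n ℝ) (d : n → ℝ) (k k' : l) :
    (G * diagonal d * Gᵀ) k k' = ∑ a, G k a * d a * G k' a := by
  rw [mul_apply]
  simp only [mul_diagonal, transpose_apply]

lemma transpose_mul_single_mul_apply_self {m n : Type*} [Fintype m] [DecidableEq m]
    (B : Matrix m n ℝ) (i j : m) (a : n) :
    (Bᵀ * single i j (1 : ℝ) * B) a a = B i a * B j a := by
  simp [mul_apply, single_apply, ite_and]

lemma sum_sum_sq_mul_diagonal_mul_transpose {m n : Type*} [Fintype m] [Fintype n] [DecidableEq n]
    {B : Matrix m n ℝ} (hB : Bᵀ * B = 1) (c : n → ℝ) :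
    ∑ i, ∑ j, (B * diagonal c * Bᵀ) i j ^ 2 = ∑ a, c a ^ 2 := by
  have hfrob : ∀ M : Matrix m m ℝ, ∑ i, ∑ j, M i j ^ 2 = trace (M * Mᵀ) := fun M => by
    simp [trace, mul_apply, sq]
  rw [hfrob]
  calc trace (B * diagonal c * Bᵀ * (B * diagonal c * Bᵀ)ᵀ)
      = trace (diagonal c * (Bᵀ * B) * diagonal c * (Bᵀ * B)) := by
        rw [transpose_mul, transpose_mul, diagonal_transpose, transpose_transpose,
          Matrix.mul_assoc B, Matrix.mul_assoc B, trace_mul_comm]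
        simp only [Matrix.mul_assoc]
    _ = ∑ a, c a ^ 2 := by simp [hB, trace, sq]

end MatrixAlgebra

theorem jade_criterion_eq_general
    {Ω : Type*} [MeasureSpace Ω]
    {p : ℕ} (z : Fin p → Ω → ℝ) (κ : Fin p → ℝ)
    (hindep : iIndepFun z ℙ)
    (hL4 : ∀ i, MemLp (z i) 4 ℙ)
    (hmean : ∀ i, ∫ ω, z i ω = 0)
    (hvar : ∀ i, ∫ ω, (z i ω) ^ 2 = 1)
    (hκ : ∀ i, κ i = (∫ ω, (z i ω) ^ 4) - 3)
    (U : Matrix (Fin p) (Fin p) ℝ) (hU : U * Uᵀ = 1)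
    (V : Matrix (Fin p) (Fin p) ℝ)
    (xst : Ω → Fin p → ℝ) (hxst : ∀ ω, xst ω = Uᵀ.mulVec fun i => z i ω) :
    ∑ i, ∑ j, ∑ k,
        ((V * cumulantMatrix xst (Matrix.single i j 1) * Vᵀ) k k) ^ 2
      = ∑ k, ∑ l, ((V * Uᵀ) k l) ^ 4 * (κ l) ^ 2 := by
  have hUt : Uᵀ * Uᵀᵀ = 1 := by rw [transpose_transpose]; exact mul_eq_one_comm.mp hU
  have hcumulant : ∀ i j, cumulantMatrix xst (single i j 1)
      = Uᵀ * diagonal (fun a => κ a * (Uᵀᵀ * single i j (1 : ℝ) * Uᵀ) a a) * Uᵀᵀ := fun i j => by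
    rw [funext hxst, cumulantMatrix_mulVec hL4 _ hUt,
      cumulantMatrix_of_iIndepFun κ hindep hL4 hmean hvar hκ]
  have hentry : ∀ i j k, (V * cumulantMatrix xst (single i j 1) * Vᵀ) k k
      = (Uᵀ * diagonal (fun a => κ a * (V * Uᵀ) k a ^ 2) * Uᵀᵀ) i j := fun i j k => by
    have hconj : ∀ D : Matrix (Fin p) (Fin p) ℝ, V * (Uᵀ * D * Uᵀᵀ) * Vᵀ = V * Uᵀ * D * (V * Uᵀ)ᵀ :=
      fun D => by simp only [transpose_mul, Matrix.mul_assoc]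
    rw [hcumulant, hconj, mul_diagonal_mul_transpose_apply, mul_diagonal_mul_transpose_apply]
    simp only [transpose_mul_single_mul_apply_self]
    exact Finset.sum_congr rfl fun a _ => by ring
  simp only [hentry]
  rw [(Finset.sum_congr rfl fun _ _ => Finset.sum_comm).trans Finset.sum_comm]
  simp only [sum_sum_sq_mul_diagonal_mul_transpose (by rwa [transpose_transpose] : Uᵀᵀ * Uᵀ = 1)]
  exact Finset.sum_congr rfl fun k _ => Finset.sum_congr rfl fun l _ => by ring

/-- The JADE criterion evaluated at an orthogonal matrix `V`, for `x_st = U'z` with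
`z` having independent standardized components, equals `∑ k l, g_{kl}^4 κ_l^2`
where `G = V U'`. -/
theorem jade_criterion_eq
    {Ω : Type*} [MeasureSpace Ω] [IsProbabilityMeasure (ℙ : Measure Ω)]
    {p : ℕ} (z : Fin p → Ω → ℝ) (κ : Fin p → ℝ)
    (hmeas : ∀ i, Measurable (z i))
    (hindep : iIndepFun z ℙ)
    (hL4 : ∀ i, MemLp (z i) 4 ℙ)
    (hmean : ∀ i, ∫ ω, z i ω = 0)
    (hvar : ∀ i, ∫ ω, (z i ω) ^ 2 = 1)
    (hκ : ∀ i, κ i = (∫ ω, (z i ω) ^ 4) - 3)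
    (U : Matrix (Fin p) (Fin p) ℝ) (hU : U * Uᵀ = 1)
    (V : Matrix (Fin p) (Fin p) ℝ) (hV : V * Vᵀ = 1)
    (xst : Ω → Fin p → ℝ) (hxst : ∀ ω, xst ω = Uᵀ.mulVec fun i => z i ω) :
    ∑ i, ∑ j, ∑ k,
        ((V * cumulantMatrix xst (Matrix.single i j 1) * Vᵀ) k k) ^ 2
      = ∑ k, ∑ l, ((V * Uᵀ) k l) ^ 4 * (κ l) ^ 2 :=
  jade_criterion_eq_general z κ hindep hL4 hmean hvar hκ U hU V xst hxst
end
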